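/- arXiv:1709.06607 — 3 statements merged into one kernel-verified Lean document; each statement's English description precedes it below -/
import Mathlib

section
/- The smallest eigenvalue of the Schur complement of a positive definite block in a symmetric positive definite matrix is at least the smallest eigenvalue of the whole matrix: if M = [[A, B], [Bᵀ, C]] is symmetric positive definite, then eig_min(C − BᵀA⁻¹B) ≥ eig_min(M). -/
/-!
With `x = -A⁻¹ B v`, the quadratic form of `M` at `(x, v)` equals that of the Schur complement
at `v` (complete the square), while `‖(x, v)‖² ≥ ‖v‖²`. Since `M` is positive semidefinite,
`max lmin 0 * ‖w‖² ≤ wᵀ M w` as well, and this lower bound is monotone in `‖w‖²`.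
-/

open Matrix

namespace Matrix

variable {m n R : Type*}

theorem dotProduct_self_nonneg [Fintype n] [Ring R] [LinearOrder R] [IsStrictOrderedRing R]
    (v : n → R) : 0 ≤ v ⬝ᵥ v :=
  Finset.sum_nonneg fun i _ => mul_self_nonneg (v i)

theorem posDef_of_posDef_fromBlocks [CommRing R] [PartialOrder R] [StarRing R]
    {A : Matrix m m R} {B : Matrix m n R} {C : Matrix n m R} {D : Matrix n n R}
    (hM : (fromBlocks A B C D).PosDef) : A.PosDef :=
  hM.submatrix Sum.inl_injective

theorem dotProduct_fromBlocks_mulVec_schur [Fintype m] [Fintype n] [DecidableEq m] [CommRing R]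
    [StarRing R] [TrivialStar R] {A : Matrix m m R} [Invertible A] (hA : A.IsHermitian)
    (B : Matrix m n R) (D : Matrix n n R) (v : n → R) :
    (-((A⁻¹ * B) *ᵥ v) ⊕ᵥ v) ⬝ᵥ fromBlocks A B Bᵀ D *ᵥ (-((A⁻¹ * B) *ᵥ v) ⊕ᵥ v) =
      v ⬝ᵥ (D - Bᵀ * A⁻¹ * B) *ᵥ v := by
  simpa [dotProduct_mulVec] using schur_complement_eq₁₁ B D (-((A⁻¹ * B) *ᵥ v)) v hA

end Matrix

theorem schur_complement_eig_min {k m : ℕ}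
    (A : Matrix (Fin k) (Fin k) ℝ) (B : Matrix (Fin k) (Fin m) ℝ)
    (C : Matrix (Fin m) (Fin m) ℝ)
    (hM : (fromBlocks A B Bᵀ C).PosDef) (lmin : ℝ)
    (hlmin : ∀ w : (Fin k ⊕ Fin m) → ℝ,
      lmin * (w ⬝ᵥ w) ≤ w ⬝ᵥ ((fromBlocks A B Bᵀ C).mulVec w)) :
    ∀ v : Fin m → ℝ, lmin * (v ⬝ᵥ v) ≤ v ⬝ᵥ ((C - Bᵀ * A⁻¹ * B).mulVec v) := by
  intro v
  have hA := posDef_of_posDef_fromBlocks hM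
  have := hA.isUnit.invertible
  set w := -((A⁻¹ * B) *ᵥ v) ⊕ᵥ v
  have hvw : v ⬝ᵥ v ≤ w ⬝ᵥ w := by
    simpa [w, sumElim_dotProduct_sumElim] using dotProduct_self_nonneg ((A⁻¹ * B) *ᵥ v)
  calc lmin * (v ⬝ᵥ v)
      ≤ max lmin 0 * (v ⬝ᵥ v) :=
        mul_le_mul_of_nonneg_right (le_max_left _ _) (dotProduct_self_nonneg v)
    _ ≤ max lmin 0 * (w ⬝ᵥ w) := by gcongr
    _ = max (lmin * (w ⬝ᵥ w)) 0 := by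
        rw [max_mul_of_nonneg _ _ (dotProduct_self_nonneg w), zero_mul]
    _ ≤ w ⬝ᵥ fromBlocks A B Bᵀ C *ᵥ w :=
        max_le (hlmin w) (hM.posSemidef.dotProduct_mulVec_nonneg w)
    _ = v ⬝ᵥ (C - Bᵀ * A⁻¹ * B) *ᵥ v := dotProduct_fromBlocks_mulVec_schur hA.isHermitian B C v
end

section
/- For a nonsingular k × k matrix A_k with eigenvalues in (a₁, a₂) ⊂ (0, ∞), the pMOM normalizing constant d_k, defined by d_k⁻¹ = ∫ (2π)^{-k/2} |A_k|^{1/2} exp(-βᵀA_kβ/2) ∏_{i=1}^k β_i^{2r} dβ evaluated with τσ² = 1, satisfies (a₁/a₂)^{k/2}(a₁^r/(2r-1)!!)^k < d_k < (a₂/a₁)^{k/2}(a₂^r/(2r-1)!!)^k. -/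
open Matrix Real MeasureTheory

/-- The double factorial `(2r-1)!! = 1 · 3 · 5 ⋯ (2r-1)`. -/
noncomputable def oddDoubleFactorial (r : ℕ) : ℝ :=
  ∏ i ∈ Finset.range r, (2 * (i:ℝ) + 1)

/-!
Diagonalising `A` gives `a₁ ‖β‖² ≤ βᵀAβ ≤ a₂ ‖β‖²`, so the integral defining `dk⁻¹` is squeezed
between two integrals of product form, `∏ ∫ x^{2r} e^{-a x²/2} dx` with `a = a₂` and `a = a₁`.
Each factor equals `(2r-1)!! a^{-r} √(2π/a)` by integration by parts. The remaining factor
`(2π)^{-k/2} √det A` is squeezed strictly by `a₁^k < det A = ∏ λᵢ < a₂^k`, which makes the bounds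
strict, and inverting gives the bounds on `dk`.
-/

lemma oddDoubleFactorial_pos (r : ℕ) : 0 < oddDoubleFactorial r :=
  Finset.prod_pos fun _ _ => by positivity

lemma oddDoubleFactorial_succ (r : ℕ) :
    oddDoubleFactorial (r + 1) = oddDoubleFactorial r * (2 * r + 1) :=
  Finset.prod_range_succ _ r

section GaussianMoments

variable {a : ℝ}

lemma integrable_pow_mul_exp_neg_mul_sq_div_two (ha : 0 < a) (n : ℕ) :
    Integrable fun x : ℝ => x ^ n * exp (-(a * x ^ 2) / 2) := by
  have h := integrable_rpow_mul_exp_neg_mul_sq (half_pos ha)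
    (neg_one_lt_zero.trans_le n.cast_nonneg)
  refine h.congr (ae_of_all _ fun x => ?_)
  simp only [rpow_natCast]
  ring_nf

lemma integral_pow_add_two_mul_exp_neg_mul_sq_div_two (ha : 0 < a) (n : ℕ) :
    a * ∫ x : ℝ, x ^ (n + 2) * exp (-(a * x ^ 2) / 2)
      = (n + 1) * ∫ x : ℝ, x ^ n * exp (-(a * x ^ 2) / 2) := by
  have hint := integrable_pow_mul_exp_neg_mul_sq_div_two ha
  have hderiv : ∀ x : ℝ, HasDerivAt (fun x => x ^ (n + 1) * exp (-(a * x ^ 2) / 2))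
      ((n + 1) * (x ^ n * exp (-(a * x ^ 2) / 2))
        - a * (x ^ (n + 2) * exp (-(a * x ^ 2) / 2))) x := by
    intro x
    have hexp : HasDerivAt (fun x : ℝ => -(a * x ^ 2) / 2) (-(a * x)) x := by
      refine (((hasDerivAt_pow 2 x).const_mul a).neg.div_const 2).congr_deriv ?_
      push_cast
      ring
    refine ((hasDerivAt_pow (n + 1) x).mul hexp.exp).congr_deriv ?_
    push_cast
    ring
  have h := integral_eq_zero_of_hasDerivAt_of_integrable hderiv
    (((hint n).const_mul _).sub ((hint (n + 2)).const_mul a)) (hint (n + 1))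
  rw [integral_sub ((hint n).const_mul _) ((hint (n + 2)).const_mul a), integral_const_mul,
    integral_const_mul, sub_eq_zero] at h
  exact h.symm

lemma integral_pow_two_mul_mul_exp_neg_mul_sq_div_two (ha : 0 < a) (r : ℕ) :
    ∫ x : ℝ, x ^ (2 * r) * exp (-(a * x ^ 2) / 2)
      = oddDoubleFactorial r / a ^ r * √(2 * π / a) := by
  induction r with
  | zero =>
    have h := integral_gaussian (a / 2)
    simp only [oddDoubleFactorial, mul_zero, pow_zero, one_mul, Finset.range_zero,
      Finset.prod_empty, div_one]
    rw [show π / (a / 2) = 2 * π / a by ring] at h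
    rw [← h]
    congr 1 with x
    ring_nf
  | succ r ih =>
    have hrec := integral_pow_add_two_mul_exp_neg_mul_sq_div_two ha (2 * r)
    rw [ih] at hrec
    rw [show 2 * (r + 1) = 2 * r + 2 by ring, ← mul_right_inj' ha.ne', hrec,
      oddDoubleFactorial_succ]
    push_cast
    field_simp
    ring

end GaussianMoments

section ProductMoments

variable {ι : Type*} [Fintype ι] {a : ℝ}

lemma exp_neg_mul_sum_sq_div_two_mul_prod_pow (a : ℝ) (m : ℕ) (β : ι → ℝ) :
    exp (-(a * ∑ i, β i ^ 2) / 2) * ∏ i, β i ^ m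
      = ∏ i, (β i ^ m * exp (-(a * β i ^ 2) / 2)) := by
  rw [Finset.mul_sum, ← Finset.sum_neg_distrib, Finset.sum_div, exp_sum,
    Finset.prod_mul_distrib, mul_comm]

lemma prod_pow_two_mul_nonneg (r : ℕ) (β : ι → ℝ) : 0 ≤ ∏ i, β i ^ (2 * r) :=
  Finset.prod_nonneg fun i _ => (even_two_mul r).pow_nonneg (β i)

lemma integrable_exp_neg_mul_sum_sq_div_two_mul_prod_pow (ha : 0 < a) (m : ℕ) :
    Integrable fun β : ι → ℝ => exp (-(a * ∑ i, β i ^ 2) / 2) * ∏ i, β i ^ m := by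
  simp_rw [exp_neg_mul_sum_sq_div_two_mul_prod_pow]
  exact Integrable.fintype_prod fun _ => integrable_pow_mul_exp_neg_mul_sq_div_two ha m

lemma integral_exp_neg_mul_sum_sq_div_two_mul_prod_pow (ha : 0 < a) (r : ℕ) :
    ∫ β : ι → ℝ, exp (-(a * ∑ i, β i ^ 2) / 2) * ∏ i, β i ^ (2 * r)
      = (oddDoubleFactorial r / a ^ r * √(2 * π / a)) ^ Fintype.card ι := by
  simp_rw [exp_neg_mul_sum_sq_div_two_mul_prod_pow]
  rw [integral_fintype_prod_volume_eq_pow (fun x : ℝ => x ^ (2 * r) * exp (-(a * x ^ 2) / 2)),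
    integral_pow_two_mul_mul_exp_neg_mul_sq_div_two ha]

end ProductMoments

lemma sqrt_pow_eq_rpow_half {t : ℝ} (ht : 0 ≤ t) (k : ℕ) : √(t ^ k) = t ^ ((k : ℝ) / 2) := by
  rw [sqrt_eq_rpow, ← rpow_natCast, ← rpow_mul ht]
  ring_nf

namespace Matrix

variable {n : Type*} [Fintype n] [DecidableEq n]

lemma sum_sq_transpose_mulVec {U : Matrix n n ℝ} (hU : U * Uᵀ = 1) (β : n → ℝ) :
    ∑ i, (Uᵀ *ᵥ β) i ^ 2 = ∑ i, β i ^ 2 := by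
  have h : (Uᵀ *ᵥ β) ⬝ᵥ (Uᵀ *ᵥ β) = β ⬝ᵥ β := by
    nth_rw 1 [mulVec_transpose]
    rw [← dotProduct_mulVec, mulVec_mulVec, hU, one_mulVec]
  simpa only [dotProduct, sq] using h

lemma dotProduct_conj_diagonal_mulVec (U : Matrix n n ℝ) (d β : n → ℝ) :
    β ⬝ᵥ (U * diagonal d * Uᵀ) *ᵥ β = ∑ i, d i * (Uᵀ *ᵥ β) i ^ 2 := by
  rw [← mulVec_mulVec, ← mulVec_mulVec, dotProduct_mulVec, ← mulVec_transpose]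
  simp [dotProduct, mulVec_diagonal, sq, mul_left_comm]

lemma IsHermitian.exists_dotProduct_mulVec_eq_sum_eigenvalues_mul_sq {A : Matrix n n ℝ}
    (hA : A.IsHermitian) (β : n → ℝ) :
    ∃ y : n → ℝ, β ⬝ᵥ A *ᵥ β = ∑ i, hA.eigenvalues i * y i ^ 2 ∧
      ∑ i, y i ^ 2 = ∑ i, β i ^ 2 := by
  set U : Matrix n n ℝ := (hA.eigenvectorUnitary : Matrix n n ℝ)
  have hUt : star U = Uᵀ := by ext; simp [star_apply]
  have hUU : U * Uᵀ = 1 := hUt ▸ mem_unitaryGroup_iff.mp hA.eigenvectorUnitary.2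
  refine ⟨Uᵀ *ᵥ β, ?_, sum_sq_transpose_mulVec hUU β⟩
  conv_lhs => rw [hA.spectral_theorem, Unitary.conjStarAlgAut_apply]
  rw [hUt]
  exact dotProduct_conj_diagonal_mulVec U _ β

namespace IsHermitian

variable {A : Matrix n n ℝ} (hA : A.IsHermitian)
include hA

lemma mul_sum_sq_le_dotProduct_mulVec {a : ℝ} (h : ∀ i, a ≤ hA.eigenvalues i) (β : n → ℝ) :
    a * ∑ i, β i ^ 2 ≤ β ⬝ᵥ A *ᵥ β := by
  obtain ⟨y, hq, hy⟩ := hA.exists_dotProduct_mulVec_eq_sum_eigenvalues_mul_sq β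
  rw [hq, ← hy, Finset.mul_sum]
  exact Finset.sum_le_sum fun i _ => mul_le_mul_of_nonneg_right (h i) (sq_nonneg _)

lemma dotProduct_mulVec_le_mul_sum_sq {b : ℝ} (h : ∀ i, hA.eigenvalues i ≤ b) (β : n → ℝ) :
    β ⬝ᵥ A *ᵥ β ≤ b * ∑ i, β i ^ 2 := by
  obtain ⟨y, hq, hy⟩ := hA.exists_dotProduct_mulVec_eq_sum_eigenvalues_mul_sq β
  rw [hq, ← hy, Finset.mul_sum]
  exact Finset.sum_le_sum fun i _ => mul_le_mul_of_nonneg_right (h i) (sq_nonneg _)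

lemma pow_card_lt_det [Nonempty n] {a : ℝ} (ha : 0 < a) (h : ∀ i, a < hA.eigenvalues i) :
    a ^ Fintype.card n < A.det := by
  rw [hA.det_eq_prod_eigenvalues, ← Finset.card_univ, ← Finset.prod_const]
  exact Finset.prod_lt_prod_of_nonempty (fun _ _ => ha) (fun i _ => h i) Finset.univ_nonempty

lemma det_lt_pow_card [Nonempty n] {b : ℝ} (h₀ : ∀ i, 0 < hA.eigenvalues i)
    (h : ∀ i, hA.eigenvalues i < b) : A.det < b ^ Fintype.card n := by
  rw [hA.det_eq_prod_eigenvalues, ← Finset.card_univ, ← Finset.prod_const]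
  exact Finset.prod_lt_prod_of_nonempty (fun i _ => h₀ i) (fun i _ => h i) Finset.univ_nonempty

lemma rpow_card_div_two_lt_sqrt_det [Nonempty n] {a : ℝ} (ha : 0 < a)
    (h : ∀ i, a < hA.eigenvalues i) : a ^ ((Fintype.card n : ℝ) / 2) < √A.det := by
  rw [← sqrt_pow_eq_rpow_half ha.le]
  exact sqrt_lt_sqrt (by positivity) (hA.pow_card_lt_det ha h)

lemma sqrt_det_lt_rpow_card_div_two [Nonempty n] {b : ℝ} (h₀ : ∀ i, 0 < hA.eigenvalues i)
    (h : ∀ i, hA.eigenvalues i < b) : √A.det < b ^ ((Fintype.card n : ℝ) / 2) := by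
  have hb : 0 ≤ b := (h₀ (Classical.arbitrary n)).le.trans (h _).le
  have hdet : 0 ≤ A.det := by
    rw [hA.det_eq_prod_eigenvalues]
    exact Finset.prod_nonneg fun i _ => (h₀ i).le
  rw [← sqrt_pow_eq_rpow_half hb]
  exact sqrt_lt_sqrt hdet (hA.det_lt_pow_card h₀ h)

end IsHermitian

end Matrix

section QuadraticFormMoments

open Matrix

variable {ι : Type*} [Fintype ι] [DecidableEq ι] {A : Matrix ι ι ℝ} {a b : ℝ}

lemma exp_neg_dotProduct_mulVec_div_two_mul_prod_pow_le (hA : A.IsHermitian)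
    (h : ∀ i, a ≤ hA.eigenvalues i) (r : ℕ) (β : ι → ℝ) :
    exp (-(β ⬝ᵥ A *ᵥ β) / 2) * ∏ i, β i ^ (2 * r)
      ≤ exp (-(a * ∑ i, β i ^ 2) / 2) * ∏ i, β i ^ (2 * r) := by
  gcongr ?_ * _
  · exact prod_pow_two_mul_nonneg r β
  · exact exp_le_exp.mpr (by linarith [hA.mul_sum_sq_le_dotProduct_mulVec h β])

lemma le_exp_neg_dotProduct_mulVec_div_two_mul_prod_pow (hA : A.IsHermitian)
    (h : ∀ i, hA.eigenvalues i ≤ b) (r : ℕ) (β : ι → ℝ) :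
    exp (-(b * ∑ i, β i ^ 2) / 2) * ∏ i, β i ^ (2 * r)
      ≤ exp (-(β ⬝ᵥ A *ᵥ β) / 2) * ∏ i, β i ^ (2 * r) := by
  gcongr ?_ * _
  · exact prod_pow_two_mul_nonneg r β
  · exact exp_le_exp.mpr (by linarith [hA.dotProduct_mulVec_le_mul_sum_sq h β])

lemma integrable_exp_neg_dotProduct_mulVec_div_two_mul_prod_pow (hA : A.IsHermitian)
    (ha : 0 < a) (h : ∀ i, a ≤ hA.eigenvalues i) (r : ℕ) :
    Integrable fun β : ι → ℝ => exp (-(β ⬝ᵥ A *ᵥ β) / 2) * ∏ i, β i ^ (2 * r) := by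
  refine (integrable_exp_neg_mul_sum_sq_div_two_mul_prod_pow ha (2 * r)).mono' ?_
    (ae_of_all _ fun β => ?_)
  · refine Continuous.aestronglyMeasurable ?_
    simp only [dotProduct, mulVec]
    fun_prop
  · rw [norm_of_nonneg (by have := prod_pow_two_mul_nonneg r β; positivity)]
    exact exp_neg_dotProduct_mulVec_div_two_mul_prod_pow_le hA h r β

lemma integral_exp_neg_dotProduct_mulVec_div_two_mul_prod_pow_le (hA : A.IsHermitian)
    (ha : 0 < a) (h : ∀ i, a ≤ hA.eigenvalues i) (r : ℕ) :
    ∫ β : ι → ℝ, exp (-(β ⬝ᵥ A *ᵥ β) / 2) * ∏ i, β i ^ (2 * r)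
      ≤ (oddDoubleFactorial r / a ^ r * √(2 * π / a)) ^ Fintype.card ι := by
  rw [← integral_exp_neg_mul_sum_sq_div_two_mul_prod_pow ha]
  exact integral_mono (integrable_exp_neg_dotProduct_mulVec_div_two_mul_prod_pow hA ha h r)
    (integrable_exp_neg_mul_sum_sq_div_two_mul_prod_pow ha _)
    (exp_neg_dotProduct_mulVec_div_two_mul_prod_pow_le hA h r)

lemma le_integral_exp_neg_dotProduct_mulVec_div_two_mul_prod_pow (hA : A.IsHermitian)
    (ha : 0 < a) (hlo : ∀ i, a ≤ hA.eigenvalues i) (hb : 0 < b)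
    (hhi : ∀ i, hA.eigenvalues i ≤ b) (r : ℕ) :
    (oddDoubleFactorial r / b ^ r * √(2 * π / b)) ^ Fintype.card ι
      ≤ ∫ β : ι → ℝ, exp (-(β ⬝ᵥ A *ᵥ β) / 2) * ∏ i, β i ^ (2 * r) := by
  rw [← integral_exp_neg_mul_sum_sq_div_two_mul_prod_pow hb]
  exact integral_mono (integrable_exp_neg_mul_sum_sq_div_two_mul_prod_pow hb _)
    (integrable_exp_neg_dotProduct_mulVec_div_two_mul_prod_pow hA ha hlo r)
    (le_exp_neg_dotProduct_mulVec_div_two_mul_prod_pow hA hhi r)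

end QuadraticFormMoments

lemma two_pi_rpow_mul_rpow_mul_moment_pow (k r : ℕ) {a t : ℝ} (ha : 0 < a) (ht : 0 < t)
    (D : ℝ) :
    (2 * π) ^ (-(k : ℝ) / 2) * t ^ ((k : ℝ) / 2) * (D / a ^ r * √(2 * π / a)) ^ k
      = ((a / t) ^ ((k : ℝ) / 2) * (a ^ r / D) ^ k)⁻¹ := by
  have h2π : 0 < 2 * π := by positivity
  have hsqrt : √(2 * π / a) ^ k = (2 * π / a) ^ ((k : ℝ) / 2) := by
    rw [sqrt_eq_rpow, ← rpow_mul_natCast (by positivity)]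
    ring_nf
  rw [mul_pow, hsqrt, div_rpow h2π.le ha.le, div_rpow ha.le ht.le, neg_div, rpow_neg h2π.le,
    mul_inv, ← inv_pow, inv_div, inv_div]
  have : 0 < (2 * π) ^ ((k : ℝ) / 2) := by positivity
  field_simp

lemma mem_Ioo_of_inv_mem_Ioo {x p q : ℝ} (hq : 0 < q) (h : x⁻¹ ∈ Set.Ioo q⁻¹ p⁻¹) :
    x ∈ Set.Ioo p q := by
  have hx : 0 < x := inv_pos.mp ((inv_pos.mpr hq).trans h.1)
  have hp : 0 < p := inv_pos.mp (inv_pos.mpr hx |>.trans h.2)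
  exact ⟨(inv_lt_inv₀ hx hp).mp h.2, (inv_lt_inv₀ hq hx).mp h.1⟩

theorem pMOM_normalizing_constant_bounds_general {k : ℕ} (hk : 0 < k) (r : ℕ)
    (A : Matrix (Fin k) (Fin k) ℝ) (a₁ a₂ : ℝ) (ha₁ : 0 < a₁) (ha : a₁ < a₂)
    (hA : A.IsHermitian)
    (hAeig : ∀ i, a₁ < hA.eigenvalues i ∧ hA.eigenvalues i < a₂)
    (dk : ℝ)
    (hdef : dk⁻¹ = ∫ β : Fin k → ℝ,
        (2*π) ^ (-(k:ℝ)/2) * Real.sqrt A.det *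
          exp (-(β ⬝ᵥ A.mulVec β)/2) * ∏ i, (β i)^(2*r)) :
    (a₁/a₂) ^ ((k:ℝ)/2) * (a₁^r / oddDoubleFactorial r) ^ k < dk ∧
    dk < (a₂/a₁) ^ ((k:ℝ)/2) * (a₂^r / oddDoubleFactorial r) ^ k := by
  have : Nonempty (Fin k) := ⟨⟨0, hk⟩⟩
  have ha₂ : 0 < a₂ := ha₁.trans ha
  have hlo : ∀ i, a₁ ≤ hA.eigenvalues i := fun i => (hAeig i).1.le
  have hhi : ∀ i, hA.eigenvalues i ≤ a₂ := fun i => (hAeig i).2.le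
  set c := (2 * π) ^ (-(k : ℝ) / 2)
  set J := ∫ β : Fin k → ℝ, exp (-(β ⬝ᵥ A *ᵥ β) / 2) * ∏ i, β i ^ (2 * r)
  have hdk : dk⁻¹ = c * √A.det * J := by
    rw [hdef, ← integral_const_mul]
    simp only [mul_assoc]
  have hJ₁ := integral_exp_neg_dotProduct_mulVec_div_two_mul_prod_pow_le hA ha₁ hlo r
  have hJ₂ := le_integral_exp_neg_dotProduct_mulVec_div_two_mul_prod_pow hA ha₁ hlo ha₂ hhi r
  have hdet₁ := hA.rpow_card_div_two_lt_sqrt_det ha₁ fun i => (hAeig i).1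
  have hdet₂ := hA.sqrt_det_lt_rpow_card_div_two (fun i => ha₁.trans (hAeig i).1)
    fun i => (hAeig i).2
  rw [Fintype.card_fin] at hJ₁ hJ₂ hdet₁ hdet₂
  have hD := oddDoubleFactorial_pos r
  refine mem_Ioo_of_inv_mem_Ioo (by positivity) ⟨?_, ?_⟩
  · calc _ = c * a₁ ^ ((k : ℝ) / 2) * (oddDoubleFactorial r / a₂ ^ r * √(2 * π / a₂)) ^ k :=
          (two_pi_rpow_mul_rpow_mul_moment_pow k r ha₂ ha₁ _).symm
      _ < c * √A.det * (oddDoubleFactorial r / a₂ ^ r * √(2 * π / a₂)) ^ k := by gcongr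
      _ ≤ c * √A.det * J := by gcongr
      _ = dk⁻¹ := hdk.symm
  · calc dk⁻¹ = c * √A.det * J := hdk
      _ ≤ c * √A.det * (oddDoubleFactorial r / a₁ ^ r * √(2 * π / a₁)) ^ k := by gcongr
      _ < c * a₂ ^ ((k : ℝ) / 2) * (oddDoubleFactorial r / a₁ ^ r * √(2 * π / a₁)) ^ k := by
          gcongr
      _ = _ := two_pi_rpow_mul_rpow_mul_moment_pow k r ha₁ ha₂ _

theorem pMOM_normalizing_constant_bounds {k : ℕ} (hk : 0 < k) (r : ℕ) (hr : 0 < r)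
    (A : Matrix (Fin k) (Fin k) ℝ) (a₁ a₂ : ℝ) (ha₁ : 0 < a₁) (ha : a₁ < a₂)
    (hA : A.IsHermitian) (hApd : A.PosDef)
    (hAeig : ∀ i, a₁ < hA.eigenvalues i ∧ hA.eigenvalues i < a₂)
    (dk : ℝ) (hdk : 0 < dk)
    (hdef : dk⁻¹ = ∫ β : Fin k → ℝ,
        (2*π) ^ (-(k:ℝ)/2) * Real.sqrt A.det *
          exp (-(β ⬝ᵥ A.mulVec β)/2) * ∏ i, (β i)^(2*r)) :
    (a₁/a₂) ^ ((k:ℝ)/2) * (a₁^r / oddDoubleFactorial r) ^ k < dk ∧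
    dk < (a₂/a₁) ^ ((k:ℝ)/2) * (a₂^r / oddDoubleFactorial r) ^ k :=
  pMOM_normalizing_constant_bounds_general hk r A a₁ a₂ ha₁ ha hA hAeig dk hdef
end

section
/- Let R*_t = y⁻ᵀ(I − P_t)y and R_t = yᵀ(I − X_t C_t⁻¹ X_tᵀ)y where C_t = X_tᵀX_t + A_t/τ, P_t = X_t(X_tᵀX_t)⁻¹X_tᵀ, A_t symmetric with eigenvalues in (a₁, a₂), and the nonzero eigenvalues of X_tᵀX_t/n lie in [ε, ε⁻¹]. Then 0 ≤ R_t − R*_t ≤ (a₂/(nε))/((a₂/(nε)) + τ) · yᵀP_t y. -/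
/-!
With `S = XₜᵀXₜ` and `z = Xₜᵀy`, both `Rₜ - R*ₜ = zᵀ(S⁻¹ - (S + Aₜ/τ)⁻¹)z` and `yᵀPₜy = zᵀS⁻¹z`
are quadratic forms in `z`. The eigenvalue hypotheses give `0 ⪯ Aₜ ⪯ a₂ I ⪯ κ S` with
`κ = a₂/(nε)`, hence `S ⪯ S + Aₜ/τ ⪯ (1 + κ/τ) S`, and inverting reverses the Loewner order.
-/

open Matrix Real
open scoped MatrixOrder

namespace Matrix

variable {m : Type*} [Fintype m]

lemma dotProduct_mulVec_le_of_le {A B : Matrix m m ℝ} (h : A ≤ B) (x : m → ℝ) :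
    x ⬝ᵥ A *ᵥ x ≤ x ⬝ᵥ B *ᵥ x := by
  simpa [sub_mulVec, dotProduct_sub] using (le_iff.mp h).dotProduct_mulVec_nonneg x

lemma IsHermitian.dotProduct_mulVec_comm {A : Matrix m m ℝ} (hA : A.IsHermitian) (x y : m → ℝ) :
    x ⬝ᵥ A *ᵥ y = y ⬝ᵥ A *ᵥ x := by
  rw [dotProduct_mulVec, ← mulVec_transpose, ← conjTranspose_eq_transpose_of_trivial, hA,
    dotProduct_comm]

/-- With `u = B⁻¹ z` and `v = A⁻¹ z`, expanding `0 ≤ (u - v)ᵀ A (u - v)` and using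
`uᵀ A u ≤ uᵀ B u = zᵀ B⁻¹ z` gives `zᵀ B⁻¹ z ≤ zᵀ A⁻¹ z`. -/
lemma PosDef.inv_le_inv_of_le [DecidableEq m] {A B : Matrix m m ℝ} (hA : A.PosDef) (hAB : A ≤ B) :
    B⁻¹ ≤ A⁻¹ := by
  have hB : B.PosDef := by simpa using hA.add_posSemidef (le_iff.mp hAB)
  refine le_iff.mpr (PosSemidef.of_dotProduct_mulVec_nonneg
    (hA.inv.isHermitian.sub hB.inv.isHermitian) fun z => ?_)
  set u := B⁻¹ *ᵥ z
  set v := A⁻¹ *ᵥ z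
  have hAv : A *ᵥ v = z := by
    rw [mulVec_mulVec, mul_nonsing_inv _ (A.isUnit_iff_isUnit_det.mp hA.isUnit), one_mulVec]
  have hBu : B *ᵥ u = z := by
    rw [mulVec_mulVec, mul_nonsing_inv _ (B.isUnit_iff_isUnit_det.mp hB.isUnit), one_mulVec]
  have hexpand := hA.posSemidef.dotProduct_mulVec_nonneg (u - v)
  have hmono := dotProduct_mulVec_le_of_le hAB u
  simp only [star_trivial, sub_mulVec, mulVec_sub, dotProduct_sub, sub_dotProduct,
    hA.isHermitian.dotProduct_mulVec_comm v u, hAv, hBu] at hexpand hmono ⊢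
  rw [dotProduct_comm u z, dotProduct_comm v z] at *
  linarith

lemma IsHermitian.le_smul_one_of_eigenvalues_le [DecidableEq m] {A : Matrix m m ℝ}
    (hA : A.IsHermitian) {c : ℝ} (h : ∀ i, hA.eigenvalues i ≤ c) : A ≤ c • 1 := by
  rw [← Algebra.algebraMap_eq_smul_one]
  refine le_algebraMap_of_spectrum_le ?_ hA
  rw [hA.spectrum_real_eq_range_eigenvalues]
  rintro _ ⟨i, rfl⟩
  exact h i

lemma IsHermitian.smul_one_le_of_le_eigenvalues [DecidableEq m] {A : Matrix m m ℝ}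
    (hA : A.IsHermitian) {c : ℝ} (h : ∀ i, c ≤ hA.eigenvalues i) : c • 1 ≤ A := by
  rw [← Algebra.algebraMap_eq_smul_one]
  refine algebraMap_le_of_le_spectrum ?_ hA
  rw [hA.spectrum_real_eq_range_eigenvalues]
  rintro _ ⟨i, rfl⟩
  exact h i

/-- In the coordinates `M = S^{-1/2} A S^{-1/2}` this is the operator bound
`I - (I + M/τ)⁻¹ ⪯ κ/(κ+τ) I` for `M ⪯ κ I`. -/
lemma PosDef.smul_inv_le_inv_add_smul [DecidableEq m] {S A : Matrix m m ℝ} (hS : S.PosDef)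
    (hA₀ : 0 ≤ A) {κ τ : ℝ} (hκ : 0 ≤ κ) (hτ : 0 < τ) (hA : A ≤ κ • S) :
    (τ / (κ + τ)) • S⁻¹ ≤ (S + τ⁻¹ • A)⁻¹ := by
  have hC : (S + τ⁻¹ • A).PosDef :=
    hS.add_posSemidef (smul_nonneg (inv_nonneg.mpr hτ.le) hA₀).posSemidef
  have hle : S + τ⁻¹ • A ≤ ((κ + τ) / τ) • S := calc
    S + τ⁻¹ • A ≤ S + τ⁻¹ • κ • S :=
      add_le_add_right (smul_le_smul_of_nonneg_left hA (inv_nonneg.mpr hτ.le)) S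
    _ = ((κ + τ) / τ) • S := by match_scalars; field_simp; ring
  have : Invertible ((κ + τ) / τ) := invertibleOfNonzero (by positivity)
  have hinv := hC.inv_le_inv_of_le hle
  rwa [inv_smul S _ (S.isUnit_iff_isUnit_det.mp hS.isUnit), invOf_eq_inv, inv_div] at hinv

lemma PosDef.dotProduct_inv_sub_inv_add_smul_mulVec_mem_Icc [DecidableEq m] {S A : Matrix m m ℝ}
    (hS : S.PosDef) (hA₀ : 0 ≤ A) {κ τ : ℝ} (hκ : 0 ≤ κ) (hτ : 0 < τ) (hA : A ≤ κ • S)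
    (z : m → ℝ) :
    z ⬝ᵥ (S⁻¹ - (S + τ⁻¹ • A)⁻¹) *ᵥ z ∈ Set.Icc 0 (κ / (κ + τ) * z ⬝ᵥ S⁻¹ *ᵥ z) := by
  have hlow := dotProduct_mulVec_le_of_le
    (hS.inv_le_inv_of_le (le_add_of_nonneg_right (smul_nonneg (inv_nonneg.mpr hτ.le) hA₀))) z
  have hup := dotProduct_mulVec_le_of_le (hS.smul_inv_le_inv_add_smul hA₀ hκ hτ hA) z
  rw [smul_mulVec, dotProduct_smul, smul_eq_mul] at hup
  have hcoef : κ / (κ + τ) = 1 - τ / (κ + τ) := by field_simp; ring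
  rw [sub_mulVec, dotProduct_sub, hcoef]
  constructor <;> linarith

lemma dotProduct_mul_mul_transpose_mulVec {R n t : Type*} [CommSemiring R] [Fintype n]
    [Fintype t] (X : Matrix n t R) (M : Matrix t t R) (y : n → R) :
    y ⬝ᵥ (X * M * Xᵀ) *ᵥ y = (Xᵀ *ᵥ y) ⬝ᵥ M *ᵥ (Xᵀ *ᵥ y) := by
  rw [← mulVec_mulVec, ← mulVec_mulVec, dotProduct_mulVec, ← mulVec_transpose]

end Matrix

theorem Rt_minus_Rstar_bounds_general {n t : ℕ} (hn : 0 < n)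
    (y : Fin n → ℝ) (Xt : Matrix (Fin n) (Fin t) ℝ)
    (At : Matrix (Fin t) (Fin t) ℝ) (a₁ a₂ ε τ : ℝ)
    (ha₁ : 0 < a₁) (ha : a₁ < a₂) (hε : 0 < ε) (hτ : 0 < τ)
    (hXpd : (Xtᵀ * Xt).PosDef)
    (hAt : At.IsHermitian)
    (hAeig : ∀ i, a₁ < hAt.eigenvalues i ∧ hAt.eigenvalues i < a₂)
    (hX : ((1/(n:ℝ)) • (Xtᵀ * Xt)).IsHermitian)
    (hXeig : ∀ i, ε ≤ hX.eigenvalues i ∧ hX.eigenvalues i ≤ ε⁻¹) :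
    let Pt : Matrix (Fin n) (Fin n) ℝ := Xt * (Xtᵀ * Xt)⁻¹ * Xtᵀ
    let Rstar : ℝ := y ⬝ᵥ ((1 - Pt).mulVec y)
    let Rt : ℝ := y ⬝ᵥ ((1 - Xt * (Xtᵀ * Xt + τ⁻¹ • At)⁻¹ * Xtᵀ).mulVec y)
    0 ≤ Rt - Rstar ∧
    Rt - Rstar ≤ (a₂ / ((n:ℝ)*ε)) / (a₂ / ((n:ℝ)*ε) + τ) * (y ⬝ᵥ Pt.mulVec y) := by
  set S := Xtᵀ * Xt
  intro Pt Rstar Rt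
  have hnε : 0 < (n : ℝ) * ε := by positivity
  have hA₀ : 0 ≤ At := by
    simpa using hAt.smul_one_le_of_le_eigenvalues fun i => (ha₁.trans (hAeig i).1).le
  have hS : ((n : ℝ) * ε) • 1 ≤ S := by
    have h := smul_le_smul_of_nonneg_left
      (hX.smul_one_le_of_le_eigenvalues fun i => (hXeig i).1) (Nat.cast_nonneg (α := ℝ) n)
    rwa [smul_smul, smul_smul, mul_one_div_cancel (by positivity), one_smul] at h
  have hk : 0 ≤ a₂ / ((n : ℝ) * ε) := div_nonneg (ha₁.trans ha).le hnε.le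
  have hAS : At ≤ (a₂ / ((n : ℝ) * ε)) • S := calc
    At ≤ a₂ • 1 := hAt.le_smul_one_of_eigenvalues_le fun i => (hAeig i).2.le
    _ = (a₂ / ((n : ℝ) * ε)) • ((n : ℝ) * ε) • 1 := by rw [smul_smul, div_mul_cancel₀ _ hnε.ne']
    _ ≤ (a₂ / ((n : ℝ) * ε)) • S := smul_le_smul_of_nonneg_left hS hk
  have hdiff : Rt - Rstar = (Xtᵀ *ᵥ y) ⬝ᵥ (S⁻¹ - (S + τ⁻¹ • At)⁻¹) *ᵥ (Xtᵀ *ᵥ y) := by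
    simp only [Rt, Rstar, Pt, sub_mulVec, dotProduct_sub, one_mulVec,
      dotProduct_mul_mul_transpose_mulVec]
    ring
  have hPt : y ⬝ᵥ Pt *ᵥ y = (Xtᵀ *ᵥ y) ⬝ᵥ S⁻¹ *ᵥ (Xtᵀ *ᵥ y) :=
    dotProduct_mul_mul_transpose_mulVec Xt S⁻¹ y
  rw [hdiff, hPt]
  exact hXpd.dotProduct_inv_sub_inv_add_smul_mulVec_mem_Icc hA₀ hk hτ hAS _

theorem Rt_minus_Rstar_bounds {n t : ℕ} (hn : 0 < n)
    (y : Fin n → ℝ) (Xt : Matrix (Fin n) (Fin t) ℝ)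
    (At : Matrix (Fin t) (Fin t) ℝ) (a₁ a₂ ε τ : ℝ)
    (ha₁ : 0 < a₁) (ha : a₁ < a₂) (hε : 0 < ε) (hε1 : ε < 1) (hτ : 0 < τ)
    (hXpd : (Xtᵀ * Xt).PosDef)
    (hAt : At.IsHermitian)
    (hAeig : ∀ i, a₁ < hAt.eigenvalues i ∧ hAt.eigenvalues i < a₂)
    (hX : ((1/(n:ℝ)) • (Xtᵀ * Xt)).IsHermitian)
    (hXeig : ∀ i, ε ≤ hX.eigenvalues i ∧ hX.eigenvalues i ≤ ε⁻¹) :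
    let Pt : Matrix (Fin n) (Fin n) ℝ := Xt * (Xtᵀ * Xt)⁻¹ * Xtᵀ
    let Rstar : ℝ := y ⬝ᵥ ((1 - Pt).mulVec y)
    let Rt : ℝ := y ⬝ᵥ ((1 - Xt * (Xtᵀ * Xt + τ⁻¹ • At)⁻¹ * Xtᵀ).mulVec y)
    0 ≤ Rt - Rstar ∧
    Rt - Rstar ≤ (a₂ / ((n:ℝ)*ε)) / (a₂ / ((n:ℝ)*ε) + τ) * (y ⬝ᵥ Pt.mulVec y) :=
  Rt_minus_Rstar_bounds_general hn y Xt At a₁ a₂ ε τ ha₁ ha hε hτ hXpd hAt hAeig hX hXeig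
end
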